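/- arXiv:0711.3784 — 2 statements merged into one kernel-verified Lean document; each statement's English description precedes it below -/
import Mathlib

section
/- Let a(0), a(1), …, a(2^{n+1}−1) be complex numbers with a(0) = 0. Then max_{1 ≤ p < 2^{n+1}} |a(p)|² ≤ (n+1) ∑_{k=0}^{n} ∑_{j=0}^{2^{n−k}−1} |a(2^k + j·2^{k+1}) − a(j·2^{k+1})|². -/
/-!
Let `⌊p⌋ₖ = ⌊p / 2^k⌋ · 2^k` be `p` with its lowest `k` binary digits cleared. Then `⌊p⌋₀ = p`, `⌊p⌋ₙ₊₁ = 0`, and `a p` telescopes into the `n + 1` differences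
`a ⌊p⌋ₖ - a ⌊p⌋ₖ₊₁`. Each difference is either `0` (digit `k` of `p` is `0`) or equal to one of the
terms `a (2^k + j·2^(k+1)) - a (j·2^(k+1))` with `j = ⌊p / 2^(k+1)⌋`. Cauchy–Schwarz over the
`n + 1` differences gives the factor `n + 1`.
-/

open Finset

theorem sq_norm_sum_le_card_mul_sum_sq_norm {ι E : Type*} [SeminormedAddCommGroup E]
    (s : Finset ι) (f : ι → E) :
    ‖∑ i ∈ s, f i‖ ^ 2 ≤ #s * ∑ i ∈ s, ‖f i‖ ^ 2 :=
  (pow_le_pow_left₀ (norm_nonneg _) (norm_sum_le s f) 2).trans sq_sum_le_card_mul_sum_sq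

def dyadicFloor (p k : ℕ) : ℕ := p / 2 ^ k * 2 ^ k

theorem dyadicFloor_zero (p : ℕ) : dyadicFloor p 0 = p := by
  simp [dyadicFloor]

theorem dyadicFloor_of_lt {p k : ℕ} (hp : p < 2 ^ k) : dyadicFloor p k = 0 := by
  simp [dyadicFloor, Nat.div_eq_of_lt hp]

theorem dyadicFloor_eq_succ_add (p k : ℕ) :
    dyadicFloor p k = dyadicFloor p (k + 1) + p / 2 ^ k % 2 * 2 ^ k := by
  have hdiv : p / 2 ^ (k + 1) = p / 2 ^ k / 2 := by
    rw [pow_succ, Nat.div_div_eq_div_mul]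
  have hdigit := Nat.div_add_mod (p / 2 ^ k) 2
  unfold dyadicFloor
  rw [hdiv]
  calc p / 2 ^ k * 2 ^ k = (2 * (p / 2 ^ k / 2) + p / 2 ^ k % 2) * 2 ^ k := by rw [hdigit]
    _ = p / 2 ^ k / 2 * 2 ^ (k + 1) + p / 2 ^ k % 2 * 2 ^ k := by ring

section Increments

variable {E : Type*}

theorem sum_range_sub_dyadicFloor [AddCommGroup E] (a : ℕ → E) (ha : a 0 = 0) {p m : ℕ}
    (hp : p < 2 ^ m) :
    ∑ k ∈ range m, (a (dyadicFloor p k) - a (dyadicFloor p (k + 1))) = a p := by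
  rw [sum_range_sub' (fun k ↦ a (dyadicFloor p k)), dyadicFloor_zero, dyadicFloor_of_lt hp, ha,
    sub_zero]

theorem sub_dyadicFloor_succ [AddGroup E] (a : ℕ → E) (p k : ℕ) :
    a (dyadicFloor p k) - a (dyadicFloor p (k + 1)) =
      if p / 2 ^ k % 2 = 0 then 0
      else a (2 ^ k + p / 2 ^ (k + 1) * 2 ^ (k + 1)) - a (p / 2 ^ (k + 1) * 2 ^ (k + 1)) := by
  rw [dyadicFloor_eq_succ_add p k]
  rcases Nat.mod_two_eq_zero_or_one (p / 2 ^ k) with hdigit | hdigit <;>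
    simp [hdigit, dyadicFloor, add_comm]

theorem sq_norm_sub_dyadicFloor_succ_le [SeminormedAddCommGroup E] (a : ℕ → E) {p n k : ℕ}
    (hp : p < 2 ^ (n + 1)) (hk : k ≤ n) :
    ‖a (dyadicFloor p k) - a (dyadicFloor p (k + 1))‖ ^ 2 ≤
      ∑ j ∈ range (2 ^ (n - k)), ‖a (2 ^ k + j * 2 ^ (k + 1)) - a (j * 2 ^ (k + 1))‖ ^ 2 := by
  have hj : p / 2 ^ (k + 1) < 2 ^ (n - k) := by
    rw [Nat.div_lt_iff_lt_mul (by positivity), ← pow_add]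
    rwa [show n - k + (k + 1) = n + 1 by omega]
  rw [sub_dyadicFloor_succ]
  split_ifs
  · simpa using sum_nonneg fun j _ ↦ sq_nonneg ‖a (2 ^ k + j * 2 ^ (k + 1)) - a (j * 2 ^ (k + 1))‖
  · exact single_le_sum (f := fun j ↦ ‖a (2 ^ k + j * 2 ^ (k + 1)) - a (j * 2 ^ (k + 1))‖ ^ 2)
      (fun _ _ ↦ sq_nonneg _) (mem_range.mpr hj)

end Increments

/-- The Rademacher–Menchoff combinatorial lemma: for complex numbers
`a 0, …, a (2^(n+1) - 1)` with `a 0 = 0`,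
`max_{1 ≤ p < 2^(n+1)} |a p|² ≤ (n+1) ∑_{k=0}^{n} ∑_{j=0}^{2^(n-k)-1}
  |a (2^k + j·2^(k+1)) - a (j·2^(k+1))|²`. -/
theorem stmt_2 (n : ℕ) (a : ℕ → ℂ) (ha : a 0 = 0) :
    ∀ p, 1 ≤ p → p < 2 ^ (n + 1) →
      ‖a p‖ ^ 2 ≤ (n + 1 : ℝ) *
        ∑ k ∈ Finset.range (n + 1), ∑ j ∈ Finset.range (2 ^ (n - k)),
          ‖a (2 ^ k + j * 2 ^ (k + 1)) - a (j * 2 ^ (k + 1))‖ ^ 2 := by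
  intro p _ hp
  calc ‖a p‖ ^ 2
      = ‖∑ k ∈ range (n + 1), (a (dyadicFloor p k) - a (dyadicFloor p (k + 1)))‖ ^ 2 := by
        rw [sum_range_sub_dyadicFloor a ha hp]
    _ ≤ (n + 1 : ℝ) *
          ∑ k ∈ range (n + 1), ‖a (dyadicFloor p k) - a (dyadicFloor p (k + 1))‖ ^ 2 := by
        simpa using sq_norm_sum_le_card_mul_sum_sq_norm (range (n + 1))
          fun k ↦ a (dyadicFloor p k) - a (dyadicFloor p (k + 1))
    _ ≤ _ := by
        gcongr with k hk
        exact sq_norm_sub_dyadicFloor_succ_le a hp (Nat.lt_succ_iff.mp (mem_range.mp hk))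
end

section
/- Let X_1, X_2, … be pairwise uncorrelated complex-valued random variables with E[X_i] = 0 and variances σ_i² = E[|X_i|²], and let S_n = X_1 + ⋯ + X_n. Then for every m ≥ 0, E[max_{2^m < k ≤ 2^{m+1}} |S_k − S_{2^m}|²] ≤ (m² + 1) ∑_{i=1}^{2^m} σ_{2^m+i}². -/
open MeasureTheory Finset

/-!
Split `(0, j]`, for `j < 2^m`, along the binary expansion of `j`: it is the disjoint union of at
most `m` dyadic intervals `(t 2^l, (t+1) 2^l]` of pairwise distinct levels `l < m`. By
Cauchy–Schwarz, `‖S_j‖² ≤ m ∑_l ‖block at level l‖²`, and bounding the block at level `l` by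
the sum over all level-`l` blocks in `(0, 2^m]` gives a bound independent of `j`, hence a bound on
the maximum. Orthogonality turns the expectation of the sum over all blocks of one level into
`∑_{i ≤ 2^m} σ_i²`, which yields the factor `m · m + 1`.
-/

section Dyadic

variable {M E : Type*} [AddCommMonoid M] [SeminormedAddCommGroup E]

def dyadicBlock (g : ℕ → M) (l t : ℕ) : M :=
  ∑ i ∈ Ioc (t * 2 ^ l) ((t + 1) * 2 ^ l), g i

def sumSqDyadicBlocks (g : ℕ → E) (m l : ℕ) : ℝ :=
  ∑ t ∈ range (2 ^ (m - l)), ‖dyadicBlock g l t‖ ^ 2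

lemma sumSqDyadicBlocks_nonneg (g : ℕ → E) (m l : ℕ) : 0 ≤ sumSqDyadicBlocks g m l :=
  sum_nonneg fun _ _ => sq_nonneg _

lemma sum_range_sum_Ioc_of_monotone (f : ℕ → M) {a : ℕ → ℕ} (ha : Monotone a) (n : ℕ) :
    ∑ k ∈ range n, ∑ i ∈ Ioc (a k) (a (k + 1)), f i = ∑ i ∈ Ioc (a 0) (a n), f i := by
  induction n with
  | zero => simp
  | succ n ih => rw [sum_range_succ, ih, sum_Ioc_consecutive f (ha n.zero_le) (ha n.le_succ)]

lemma sum_range_sum_Ioc_of_antitone (f : ℕ → M) {a : ℕ → ℕ} (ha : Antitone a) (n : ℕ) :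
    ∑ k ∈ range n, ∑ i ∈ Ioc (a (k + 1)) (a k), f i = ∑ i ∈ Ioc (a n) (a 0), f i := by
  induction n with
  | zero => simp
  | succ n ih =>
    rw [sum_range_succ, ih, add_comm, sum_Ioc_consecutive f (ha n.le_succ) (ha n.zero_le)]

lemma sum_range_dyadicBlock (g : ℕ → M) (l N : ℕ) :
    ∑ t ∈ range N, dyadicBlock g l t = ∑ i ∈ Ioc 0 (N * 2 ^ l), g i := by
  simpa [dyadicBlock] using sum_range_sum_Ioc_of_monotone g (a := fun t => t * 2 ^ l)
    (fun _ _ h => Nat.mul_le_mul_right _ h) N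

lemma div_two_pow_succ_mul (j k : ℕ) :
    j / 2 ^ (k + 1) * 2 ^ (k + 1) = j / 2 ^ k / 2 * 2 * 2 ^ k := by
  rw [Nat.div_div_eq_div_mul, ← pow_succ]
  ring

/-- `j / 2^k * 2^k` is `j` with its `k` lowest binary digits cleared. -/
lemma sum_Ioc_eq_sum_range_sum_Ioc_div_two_pow (g : ℕ → M) {j m : ℕ} (hj : j < 2 ^ m) :
    ∑ i ∈ Ioc 0 j, g i =
      ∑ k ∈ range m, ∑ i ∈ Ioc (j / 2 ^ (k + 1) * 2 ^ (k + 1)) (j / 2 ^ k * 2 ^ k), g i := by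
  have hanti : Antitone fun k => j / 2 ^ k * 2 ^ k := antitone_nat_of_succ_le fun k => by
    rw [div_two_pow_succ_mul]
    exact Nat.mul_le_mul_right _ (Nat.div_mul_le_self _ _)
  rw [sum_range_sum_Ioc_of_antitone g hanti m]
  simp [Nat.div_eq_of_lt hj]

lemma sum_Ioc_div_two_pow_eq (g : ℕ → M) (j k : ℕ) :
    ∑ i ∈ Ioc (j / 2 ^ (k + 1) * 2 ^ (k + 1)) (j / 2 ^ k * 2 ^ k), g i =
      if Odd (j / 2 ^ k) then dyadicBlock g k (j / 2 ^ k - 1) else 0 := by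
  rw [div_two_pow_succ_mul]
  obtain ⟨n, hn | hn⟩ := Nat.even_or_odd' (j / 2 ^ k) <;> rw [hn]
  · simp [mul_comm 2 n]
  · rw [show (2 * n + 1) / 2 = n by omega]
    simp [dyadicBlock, mul_comm 2 n]

lemma norm_sum_sq_le_card_mul {ι : Type*} (s : Finset ι) (f : ι → E) :
    ‖∑ i ∈ s, f i‖ ^ 2 ≤ #s * ∑ i ∈ s, ‖f i‖ ^ 2 :=
  (pow_le_pow_left₀ (norm_nonneg _) (norm_sum_le _ _) 2).trans sq_sum_le_card_mul_sum_sq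

lemma norm_sum_Ioc_div_two_pow_sq_le (g : ℕ → E) {j m : ℕ} (hj : j ≤ 2 ^ m) (k : ℕ) :
    ‖∑ i ∈ Ioc (j / 2 ^ (k + 1) * 2 ^ (k + 1)) (j / 2 ^ k * 2 ^ k), g i‖ ^ 2 ≤
      sumSqDyadicBlocks g m k := by
  rw [sum_Ioc_div_two_pow_eq]
  split_ifs with hodd
  · have hle : j / 2 ^ k ≤ 2 ^ (m - k) := Nat.div_le_of_le_mul <| hj.trans <| by
      rw [← pow_add]
      exact Nat.pow_le_pow_right two_pos (by omega)
    exact single_le_sum (f := fun t => ‖dyadicBlock g k t‖ ^ 2) (fun _ _ => sq_nonneg _)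
      (mem_range.2 (by have := hodd.pos; omega))
  · simpa using sumSqDyadicBlocks_nonneg g m k

lemma norm_sum_Ioc_sq_le_of_lt (g : ℕ → E) {j m : ℕ} (hj : j < 2 ^ m) :
    ‖∑ i ∈ Ioc 0 j, g i‖ ^ 2 ≤ m * ∑ l ∈ range m, sumSqDyadicBlocks g m l := by
  rw [sum_Ioc_eq_sum_range_sum_Ioc_div_two_pow g hj]
  refine (norm_sum_sq_le_card_mul _ _).trans ?_
  rw [card_range]
  gcongr with k
  exact norm_sum_Ioc_div_two_pow_sq_le g hj.le k

lemma norm_sum_Ioc_sq_le (g : ℕ → E) {j m : ℕ} (hj : j ≤ 2 ^ m) :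
    ‖∑ i ∈ Ioc 0 j, g i‖ ^ 2 ≤
      m * ∑ l ∈ range m, sumSqDyadicBlocks g m l + sumSqDyadicBlocks g m m := by
  rcases hj.lt_or_eq with hlt | rfl
  · exact (norm_sum_Ioc_sq_le_of_lt g hlt).trans
      (le_add_of_nonneg_right (sumSqDyadicBlocks_nonneg g m m))
  · refine le_add_of_nonneg_of_le
      (mul_nonneg (Nat.cast_nonneg _) (sum_nonneg fun l _ => sumSqDyadicBlocks_nonneg g _ l)) ?_
    simp [sumSqDyadicBlocks, dyadicBlock]

end Dyadic

section Orthogonal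

variable {Ω ι 𝕜 : Type*} [MeasurableSpace Ω] {μ : Measure Ω} [RCLike 𝕜]

lemma integrable_conj_mul {f g : Ω → 𝕜} (hf : MemLp f 2 μ) (hg : MemLp g 2 μ) :
    Integrable (fun ω => starRingEnd 𝕜 (f ω) * g ω) μ :=
  hf.star.integrable_mul hg

lemma integral_norm_sq_eq_re_integral_conj_mul {f : Ω → 𝕜} (hf : MemLp f 2 μ) :
    ∫ ω, ‖f ω‖ ^ 2 ∂μ = RCLike.re (∫ ω, starRingEnd 𝕜 (f ω) * f ω ∂μ) := by
  rw [← integral_re (integrable_conj_mul hf hf)]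
  simp only [RCLike.conj_mul, ← RCLike.ofReal_pow, RCLike.ofReal_re]

lemma integral_norm_sum_sq_of_orthogonal (X : ι → Ω → 𝕜) (hX : ∀ i, MemLp (X i) 2 μ)
    (horth : ∀ i j, i ≠ j → ∫ ω, starRingEnd 𝕜 (X i ω) * X j ω ∂μ = 0) (s : Finset ι) :
    ∫ ω, ‖∑ i ∈ s, X i ω‖ ^ 2 ∂μ = ∑ i ∈ s, ∫ ω, ‖X i ω‖ ^ 2 ∂μ := by
  have hint : ∀ i j, Integrable (fun ω => starRingEnd 𝕜 (X i ω) * X j ω) μ :=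
    fun i j => integrable_conj_mul (hX i) (hX j)
  have hsum : MemLp (fun ω => ∑ i ∈ s, X i ω) 2 μ := memLp_finsetSum s fun i _ => hX i
  calc ∫ ω, ‖∑ i ∈ s, X i ω‖ ^ 2 ∂μ
      = RCLike.re (∑ i ∈ s, ∑ j ∈ s, ∫ ω, starRingEnd 𝕜 (X i ω) * X j ω ∂μ) := by
        rw [integral_norm_sq_eq_re_integral_conj_mul hsum]
        simp_rw [map_sum (starRingEnd 𝕜), sum_mul_sum]
        rw [integral_finsetSum _ fun i _ => integrable_finsetSum _ fun j _ => hint i j]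
        simp_rw [integral_finsetSum _ fun j _ => hint _ j]
    _ = RCLike.re (∑ i ∈ s, ∫ ω, starRingEnd 𝕜 (X i ω) * X i ω ∂μ) := by
        rw [sum_congr rfl fun i hi => sum_eq_single_of_mem i hi fun j _ hji => horth i j hji.symm]
    _ = ∑ i ∈ s, ∫ ω, ‖X i ω‖ ^ 2 ∂μ := by
        rw [map_sum]
        exact sum_congr rfl fun i _ => (integral_norm_sq_eq_re_integral_conj_mul (hX i)).symm

lemma memLp_dyadicBlock {X : ℕ → Ω → 𝕜} (hX : ∀ i, MemLp (X i) 2 μ) (l t : ℕ) :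
    MemLp (fun ω => dyadicBlock (fun i => X i ω) l t) 2 μ :=
  memLp_finsetSum _ fun i _ => hX i

lemma integrable_sumSqDyadicBlocks {X : ℕ → Ω → 𝕜} (hX : ∀ i, MemLp (X i) 2 μ) (m l : ℕ) :
    Integrable (fun ω => sumSqDyadicBlocks (fun i => X i ω) m l) μ :=
  integrable_finsetSum _ fun t _ => (memLp_dyadicBlock hX l t).norm.integrable_sq

lemma integral_sumSqDyadicBlocks (X : ℕ → Ω → 𝕜) (hX : ∀ i, MemLp (X i) 2 μ)
    (horth : ∀ i j, i ≠ j → ∫ ω, starRingEnd 𝕜 (X i ω) * X j ω ∂μ = 0) {l m : ℕ} (hl : l ≤ m) :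
    ∫ ω, sumSqDyadicBlocks (fun i => X i ω) m l ∂μ = ∑ i ∈ Ioc 0 (2 ^ m), ∫ ω, ‖X i ω‖ ^ 2 ∂μ := by
  have hblock : ∀ t, ∫ ω, ‖dyadicBlock (fun i => X i ω) l t‖ ^ 2 ∂μ =
      dyadicBlock (fun i => ∫ ω, ‖X i ω‖ ^ 2 ∂μ) l t :=
    fun t => integral_norm_sum_sq_of_orthogonal X hX horth _
  simp_rw [sumSqDyadicBlocks]
  rw [integral_finsetSum _ fun t _ => (memLp_dyadicBlock hX l t).norm.integrable_sq]
  simp_rw [hblock]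
  rw [sum_range_dyadicBlock, ← pow_add, Nat.sub_add_cancel hl]

end Orthogonal

lemma sum_Icc_one_sub_sum_Icc_one {G : Type*} [AddCommGroup G] (f : ℕ → G) {a b : ℕ}
    (h : a ≤ b) :
    ∑ i ∈ Icc 1 b, f i - ∑ i ∈ Icc 1 a, f i = ∑ i ∈ Ioc 0 (b - a), f (a + i) := by
  have hIoc : Ioc a b = (Ioc 0 (b - a)).map (addLeftEmbedding a) := by
    rw [map_add_left_Ioc, add_zero, Nat.add_sub_cancel' h]
  have hIcc : ∀ n, Icc 1 n = Ioc 0 n := fun n => Icc_add_one_left_eq_Ioc 0 n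
  rw [sub_eq_iff_eq_add', hIcc, hIcc, ← sum_Ioc_consecutive f (Nat.zero_le a) h, hIoc, sum_map]
  rfl

theorem stmt_4_general {Ω : Type*} [MeasurableSpace Ω] (P : Measure Ω)
    (X : ℕ → Ω → ℂ) (hL2 : ∀ i, MemLp (X i) 2 P)
    (huncorr : ∀ i j, i ≠ j → ∫ ω, (starRingEnd ℂ) (X i ω) * X j ω ∂P = 0)
    (m : ℕ) :
    ∫ ω, (Finset.Ioc (2 ^ m) (2 ^ (m + 1))).sup'
        (Finset.nonempty_Ioc.mpr (Nat.pow_lt_pow_succ one_lt_two))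
        (fun k => ‖(∑ i ∈ Finset.Icc 1 k, X i ω) - ∑ i ∈ Finset.Icc 1 (2 ^ m), X i ω‖ ^ 2) ∂P
      ≤ ((m : ℝ) ^ 2 + 1) *
        ∑ i ∈ Finset.Icc 1 (2 ^ m), ∫ ω, ‖X (2 ^ m + i) ω‖ ^ 2 ∂P := by
  set Y : ℕ → Ω → ℂ := fun i => X (2 ^ m + i)
  have hY : ∀ i, MemLp (Y i) 2 P := fun i => hL2 _
  have hYorth : ∀ i j, i ≠ j → ∫ ω, starRingEnd ℂ (Y i ω) * Y j ω ∂P = 0 :=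
    fun i j hij => huncorr _ _ (by omega)
  set Q : ℕ → Ω → ℝ := fun l ω => sumSqDyadicBlocks (fun i => Y i ω) m l
  have hpt : ∀ ω, (Ioc (2 ^ m) (2 ^ (m + 1))).sup'
      (nonempty_Ioc.mpr (Nat.pow_lt_pow_succ one_lt_two))
      (fun k => ‖(∑ i ∈ Icc 1 k, X i ω) - ∑ i ∈ Icc 1 (2 ^ m), X i ω‖ ^ 2) ≤
        m * ∑ l ∈ range m, Q l ω + Q m ω := fun ω => sup'_le _ _ fun k hk => by
    rw [mem_Ioc, pow_succ] at hk
    rw [sum_Icc_one_sub_sum_Icc_one _ hk.1.le]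
    exact norm_sum_Ioc_sq_le _ (by omega)
  have hQ : ∀ l ≤ m, ∫ ω, Q l ω ∂P = ∑ i ∈ Icc 1 (2 ^ m), ∫ ω, ‖Y i ω‖ ^ 2 ∂P :=
    fun l hl => by
      rw [integral_sumSqDyadicBlocks Y hY hYorth hl, ← Icc_add_one_left_eq_Ioc, zero_add]
  have hQint : ∀ l, Integrable (Q l) P := integrable_sumSqDyadicBlocks hY m
  have hint : Integrable (fun ω => m * ∑ l ∈ range m, Q l ω + Q m ω) P :=
    ((integrable_finsetSum _ fun l _ => hQint l).const_mul _).add (hQint m)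
  refine (integral_mono_of_nonneg (ae_of_all _ fun ω => ?_) hint (ae_of_all _ hpt)).trans_eq ?_
  · exact le_sup'_of_le _ (right_mem_Ioc.2 (Nat.pow_lt_pow_succ one_lt_two)) (sq_nonneg _)
  rw [integral_add ((integrable_finsetSum _ fun l _ => hQint l).const_mul _) (hQint m),
    integral_const_mul, integral_finsetSum _ fun l _ => hQint l,
    sum_congr rfl fun l hl => hQ l (mem_range.1 hl).le, hQ m le_rfl, sum_const, card_range,
    nsmul_eq_mul]
  ring

/-- Rademacher–Menchoff maximal inequality: for pairwise uncorrelated centered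
square-integrable complex random variables `X i` (`i ≥ 1`) with partial sums
`S n = ∑_{i=1}^n X i`,
`E[max_{2^m < k ≤ 2^(m+1)} |S k - S (2^m)|²] ≤ (m²+1) ∑_{i=1}^{2^m} σ_{2^m+i}²`. -/
theorem stmt_4 {Ω : Type*} [MeasurableSpace Ω] (P : Measure Ω) [IsProbabilityMeasure P]
    (X : ℕ → Ω → ℂ) (hL2 : ∀ i, MemLp (X i) 2 P)
    (hmean : ∀ i, ∫ ω, X i ω ∂P = 0)
    (huncorr : ∀ i j, i ≠ j → ∫ ω, (starRingEnd ℂ) (X i ω) * X j ω ∂P = 0)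
    (m : ℕ) :
    ∫ ω, (Finset.Ioc (2 ^ m) (2 ^ (m + 1))).sup'
        (Finset.nonempty_Ioc.mpr (Nat.pow_lt_pow_succ one_lt_two))
        (fun k => ‖(∑ i ∈ Finset.Icc 1 k, X i ω) - ∑ i ∈ Finset.Icc 1 (2 ^ m), X i ω‖ ^ 2) ∂P
      ≤ ((m : ℝ) ^ 2 + 1) *
        ∑ i ∈ Finset.Icc 1 (2 ^ m), ∫ ω, ‖X (2 ^ m + i) ω‖ ^ 2 ∂P :=
  stmt_4_general P X hL2 huncorr m
end
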